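/- Let Γ be a finite connected simple graph containing a triangle, and suppose that every connected induced subgraph of Γ on 4 vertices that contains a triangle is the complete graph K₄. Then Γ is a complete graph. -/
import Mathlib

/-- Key step: if `{x,y,z}` is a triangle and `w` is a fourth vertex adjacent to `x`,
then `w` is adjacent to `y` and `z`. -/
lemma lemA {V : Type} [Fintype V] [DecidableEq V] (G : SimpleGraph V)
    (h4 : ∀ S : Finset V, S.card = 4 →
      (G.induce (S : Set V)).Connected →
      ¬ (G.induce (S : Set V)).CliqueFree 3 →
      ∀ a b : (S : Set V), a ≠ b → (G.induce (S : Set V)).Adj a b)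
    {x y z w : V} (hxy : G.Adj x y) (hxz : G.Adj x z) (hyz : G.Adj y z)
    (hwx : w ≠ x) (hwy : w ≠ y) (hwz : w ≠ z) (hadj : G.Adj w x) :
    G.Adj w y ∧ G.Adj w z := by
  set S : Finset V := {w, x, y, z} with hS
  have hxyne := hxy.ne
  have hxzne := hxz.ne
  have hyzne := hyz.ne
  have hcard : S.card = 4 := by
    simp [hS, Finset.card_insert_of_notMem, hwx, hwy, hwz, hxyne, hxzne, hyzne]
  have hwS : w ∈ (S : Set V) := by simp [hS]
  have hxS : x ∈ (S : Set V) := by simp [hS]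
  have hyS : y ∈ (S : Set V) := by simp [hS]
  have hzS : z ∈ (S : Set V) := by simp [hS]
  have key : ∀ u : (S : Set V), (G.induce (S : Set V)).Reachable u ⟨x, hxS⟩ := by
    rintro ⟨u, hu⟩
    simp only [hS, Finset.coe_insert, Set.mem_insert_iff, Finset.coe_singleton,
      Set.mem_singleton_iff] at hu
    rcases hu with rfl | rfl | rfl | rfl
    · exact SimpleGraph.Adj.reachable (by simpa using hadj)
    · rfl
    · exact SimpleGraph.Adj.reachable (by simpa using hxy.symm)
    · exact SimpleGraph.Adj.reachable (by simpa using hxz.symm)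
  have hconnS : (G.induce (S : Set V)).Connected := by
    rw [SimpleGraph.connected_iff]
    exact ⟨fun u v => (key u).trans (key v).symm, ⟨⟨x, hxS⟩⟩⟩
  have hncf : ¬ (G.induce (S : Set V)).CliqueFree 3 := by
    intro hcf
    exact hcf {⟨x, hxS⟩, ⟨y, hyS⟩, ⟨z, hzS⟩}
      (SimpleGraph.is3Clique_triple_iff.2 ⟨by simpa using hxy, by simpa using hxz,
        by simpa using hyz⟩)
  have h := h4 S hcard hconnS hncf
  constructor
  · have := h ⟨w, hwS⟩ ⟨y, hyS⟩ (by simp [Subtype.ext_iff, hwy])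
    simpa using this
  · have := h ⟨w, hwS⟩ ⟨z, hzS⟩ (by simp [Subtype.ext_iff, hwz])
    simpa using this

/-- If `c` lies in a triangle and `a` is adjacent to `c`, then `a` and `c` lie in a
common triangle. -/
lemma step {V : Type} [Fintype V] [DecidableEq V] (G : SimpleGraph V)
    (h4 : ∀ S : Finset V, S.card = 4 →
      (G.induce (S : Set V)).Connected →
      ¬ (G.induce (S : Set V)).CliqueFree 3 →
      ∀ a b : (S : Set V), a ≠ b → (G.induce (S : Set V)).Adj a b)
    {a c : V} (hac : G.Adj a c)
    (h : ∃ p q, G.Adj c p ∧ G.Adj c q ∧ G.Adj p q) :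
    ∃ r, r ≠ a ∧ G.Adj a r ∧ G.Adj c r := by
  obtain ⟨p, q, hcp, hcq, hpq⟩ := h
  by_cases hap : a = p
  · subst hap
    exact ⟨q, hpq.ne', hpq, hcq⟩
  by_cases haq : a = q
  · subst haq
    exact ⟨p, hpq.ne, hpq.symm, hcp⟩
  · have := lemA G h4 hcp hcq hpq hac.ne hap haq hac
    exact ⟨p, Ne.symm hap, this.1, hcp⟩

/-- Lemma 3.3.3: a finite connected graph containing a triangle, all of whose
4-vertex connected induced subgraphs containing a triangle are complete,
is itself complete. -/
theorem connected_graph_with_triangle_complete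
    {V : Type} [Fintype V] (G : SimpleGraph V)
    (hconn : G.Connected)
    (htri : ¬ G.CliqueFree 3)
    (h4 : ∀ S : Finset V, S.card = 4 →
      (G.induce (S : Set V)).Connected →
      ¬ (G.induce (S : Set V)).CliqueFree 3 →
      ∀ a b : (S : Set V), a ≠ b → (G.induce (S : Set V)).Adj a b) :
    ∀ a b : V, a ≠ b → G.Adj a b := by
  classical
  -- extract a triangle
  rw [SimpleGraph.CliqueFree] at htri
  push_neg at htri
  obtain ⟨t, ht⟩ := htri
  rw [SimpleGraph.is3Clique_iff] at ht
  obtain ⟨x₀, y₀, z₀, hxy₀, hxz₀, hyz₀, -⟩ := ht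
  -- every vertex lies in a triangle
  have tri_walk : ∀ (u v : V), G.Walk u v →
      (∃ p q, G.Adj u p ∧ G.Adj u q ∧ G.Adj p q) →
      ∃ p q, G.Adj v p ∧ G.Adj v q ∧ G.Adj p q := by
    intro u v wlk
    induction wlk with
    | nil => exact id
    | @cons u c v h p ih =>
      intro hu
      apply ih
      obtain ⟨r, _, hcr, hur⟩ := step G h4 h.symm hu
      exact ⟨u, r, h.symm, hcr, hur⟩
  have tri : ∀ v : V, ∃ p q, G.Adj v p ∧ G.Adj v q ∧ G.Adj p q := by
    intro v
    obtain ⟨wlk⟩ := hconn x₀ v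
    exact tri_walk x₀ v wlk ⟨y₀, z₀, hxy₀, hxz₀, hyz₀⟩
  -- adjacency along any walk
  have main : ∀ (a b : V), G.Walk a b → a ≠ b → G.Adj a b := by
    intro a b wlk
    induction wlk with
    | nil => intro h; exact absurd rfl h
    | @cons a c b hac p ih =>
      intro hab
      by_cases hcb : c = b
      · subst hcb; exact hac
      · have hcb' : G.Adj c b := ih hcb
        obtain ⟨r, hra, har, hcr⟩ := step G h4 hac (tri c)
        by_cases hbr : b = r
        · subst hbr; exact har.symm.symm
        · have := lemA G h4 hac.symm hcr har (Ne.symm hcb) (Ne.symm hab) hbr hcb'.symm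
          exact this.1.symm
  intro a b hab
  obtain ⟨wlk⟩ := hconn a b
  exact main a b wlk hab
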